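/- Let γ > 0, β > 0 and ε < 0 with γβ < ε², and let (E₁*, E₂*, ψ*) be the damped and driven two-site breather: s = √(ε² − γβ), E₁* = ½√(γ/β)·s, E₂* = ½√(β/γ)·s, ψ* = −arcsin(√(γβ)/ε). Then the Jacobian matrix at (E₁*, E₂*, ψ*) of the map (E₁, E₂, ψ) ↦ (2ε√(E₁E₂) sin ψ + 2βE₁, −2ε√(E₁E₂) sin ψ − 2γE₂, 2(E₂ − E₁)(1 + ε cos ψ/(2√(E₁E₂)))) equals the 3×3 matrix with rows (β, −γ, −(ε² − γβ)), (β, −γ, ε² − γβ), (−1 + β/γ, 1 − γ/β, β − γ). -/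

import Mathlib

/-! The breather is a point where `βE₁ = γE₂`, `ε √(E₁E₂) sin ψ = -βE₁` and
`ε cos ψ = -2√(E₁E₂)`: the first two components of the field vanish there, and so does the
bracket `1 + ε cos ψ / (2√(E₁E₂))` of the third. At any such point, eliminating `sin ψ` and
`cos ψ` from the partial derivatives by these relations, together with `sin² ψ + cos² ψ = 1`
(which forces `4E₁E₂ = ε² - γβ`), leaves a matrix depending on `ε, γ, β` alone. -/

noncomputable def twoSiteField (ε γ β : ℝ) (x : ℝ × ℝ × ℝ) : ℝ × ℝ × ℝ :=
  (2 * ε * Real.sqrt (x.1 * x.2.1) * Real.sin x.2.2 + 2 * β * x.1,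
   -(2 * ε * Real.sqrt (x.1 * x.2.1) * Real.sin x.2.2) - 2 * γ * x.2.1,
   2 * (x.2.1 - x.1) * (1 + ε * Real.cos x.2.2 / (2 * Real.sqrt (x.1 * x.2.1))))

open Real ContinuousLinearMap

section Jacobian

variable {ε γ β : ℝ}

theorem fderiv_twoSiteField_apply {x : ℝ × ℝ × ℝ} (hx : 0 < x.1 * x.2.1)
    (v : ℝ × ℝ × ℝ) :
    fderiv ℝ (twoSiteField ε γ β) x v =
      (ε * sin x.2.2 * (x.2.1 * v.1 + x.1 * v.2.1) / √(x.1 * x.2.1)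
          + 2 * ε * √(x.1 * x.2.1) * cos x.2.2 * v.2.2 + 2 * β * v.1,
       -(ε * sin x.2.2 * (x.2.1 * v.1 + x.1 * v.2.1) / √(x.1 * x.2.1)
          + 2 * ε * √(x.1 * x.2.1) * cos x.2.2 * v.2.2) - 2 * γ * v.2.1,
       2 * (v.2.1 - v.1) * (1 + ε * cos x.2.2 / (2 * √(x.1 * x.2.1)))
         - (x.2.1 - x.1) * ε * (sin x.2.2 * v.2.2
             + cos x.2.2 * (x.2.1 * v.1 + x.1 * v.2.1) / (2 * (x.1 * x.2.1)))
           / √(x.1 * x.2.1)) := by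
  have hE₁ : HasFDerivAt (fun x : ℝ × ℝ × ℝ => x.1) (fst ℝ ℝ (ℝ × ℝ)) x :=
    hasFDerivAt_fst
  have hE₂ : HasFDerivAt (fun x : ℝ × ℝ × ℝ => x.2.1)
      ((fst ℝ ℝ ℝ).comp (snd ℝ ℝ (ℝ × ℝ))) x :=
    hasFDerivAt_fst.comp x hasFDerivAt_snd
  have hψ : HasFDerivAt (fun x : ℝ × ℝ × ℝ => x.2.2)
      ((snd ℝ ℝ ℝ).comp (snd ℝ ℝ (ℝ × ℝ))) x :=
    hasFDerivAt_snd.comp x hasFDerivAt_snd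
  have hsqrt := (hE₁.mul hE₂).sqrt hx.ne'
  have hsin := (hasDerivAt_sin x.2.2).comp_hasFDerivAt x hψ
  have hcos := (hasDerivAt_cos x.2.2).comp_hasFDerivAt x hψ
  have hf₁ := ((hsqrt.const_mul (2 * ε)).mul hsin).add (hE₁.const_mul (2 * β))
  have hf₂ := ((hsqrt.const_mul (2 * ε)).mul hsin).neg.sub (hE₂.const_mul (2 * γ))
  have hinv := (hasDerivAt_inv (by positivity : 2 * √(x.1 * x.2.1) ≠ 0)).comp_hasFDerivAt x
    (hsqrt.const_mul 2)
  have hf₃ := ((hE₂.sub hE₁).const_mul 2).mul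
    ((hasFDerivAt_const 1 x).add ((hcos.const_mul ε).mul hinv))
  have hf : HasFDerivAt (twoSiteField ε γ β) _ x := hf₁.prodMk (hf₂.prodMk hf₃)
  rw [hf.fderiv]
  simp only [prod_apply, add_apply, smul_apply, coe_comp, coe_fst', coe_snd', neg_apply,
    sub_apply, Function.comp_apply, smul_eq_mul, zero_apply, Pi.mul_apply, Pi.sub_apply,
    Pi.add_apply, Prod.mk.injEq]
  have hsq := sq_sqrt hx.le
  set S := √(x.1 * x.2.1)
  have hS : 0 < S := sqrt_pos.mpr hx
  rw [← hsq]
  refine ⟨?_, ?_, ?_⟩ <;> (field_simp; ring)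

theorem fderiv_twoSiteField_apply_of_balance {x : ℝ × ℝ × ℝ}
    (hx : 0 < x.1 * x.2.1) (hγ : γ ≠ 0) (hbal : β * x.1 = γ * x.2.1)
    (hsin : ε * √(x.1 * x.2.1) * sin x.2.2 = -(β * x.1))
    (hcos : ε * cos x.2.2 = -(2 * √(x.1 * x.2.1))) (v : ℝ × ℝ × ℝ) :
    fderiv ℝ (twoSiteField ε γ β) x v =
      (β * v.1 - γ * v.2.1 - (ε ^ 2 - γ * β) * v.2.2,
       β * v.1 - γ * v.2.1 + (ε ^ 2 - γ * β) * v.2.2,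
       (-1 + β / γ) * v.1 + (1 - γ / β) * v.2.1 + (β - γ) * v.2.2) := by
  rw [fderiv_twoSiteField_apply hx]
  have hsq := sq_sqrt hx.le
  set S := √(x.1 * x.2.1)
  have hS : 0 < S := sqrt_pos.mpr hx
  have hE₁ : x.1 ≠ 0 := left_ne_zero_of_mul hx.ne'
  have hE₂ : x.2.1 ≠ 0 := right_ne_zero_of_mul hx.ne'
  have hβ : β ≠ 0 := left_ne_zero_of_mul (hbal ▸ mul_ne_zero hγ hE₂)
  have hε2 : ε ^ 2 - γ * β = 4 * S ^ 2 := by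
    have hS2 : S ^ 2 * (ε ^ 2 - γ * β - 4 * S ^ 2) = 0 := by
      linear_combination (-(S ^ 2 * ε ^ 2)) * sin_sq_add_cos_sq x.2.2
        + (ε * S * sin x.2.2 - β * x.1) * hsin + S ^ 2 * (ε * cos x.2.2 - 2 * S) * hcos
        + β * x.1 * hbal - γ * β * hsq
    have := (mul_eq_zero.mp hS2).resolve_left (by positivity)
    linarith
  rw [hε2]
  have hE₂sin : ε * sin x.2.2 * x.2.1 = -(β * S) :=
    mul_left_cancel₀ hE₁ (by linear_combination S * hsin - ε * sin x.2.2 * hsq)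
  have hE₁sin : ε * sin x.2.2 * x.1 = -(γ * S) :=
    mul_left_cancel₀ hE₂ (by linear_combination x.1 * hE₂sin - S * hbal)
  simp only [Prod.mk.injEq]
  refine ⟨?_, ?_, ?_⟩ <;> field_simp
  · linear_combination v.1 * hE₂sin + v.2.1 * hE₁sin + 2 * S ^ 2 * v.2.2 * hcos
  · linear_combination -(v.1 * hE₂sin + v.2.1 * hE₁sin + 2 * S ^ 2 * v.2.2 * hcos)
  · linear_combination
      β * γ * (2 * (v.2.1 - v.1) * x.1 * x.2.1 - (x.2.1 - x.1) * (v.1 * x.2.1 + v.2.1 * x.1))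
        * hcos
      - 2 * β * γ * (x.2.1 - x.1) * x.1 * v.2.2 * hE₂sin
      - 2 * S * (β * x.2.1 * v.1 + γ * x.1 * v.2.1 + β * γ * x.1 * v.2.2) * hbal

end Jacobian

noncomputable def twoSiteBreather (ε γ β : ℝ) : ℝ × ℝ × ℝ :=
  ((1 / 2) * √(γ / β) * √(ε ^ 2 - γ * β),
   (1 / 2) * √(β / γ) * √(ε ^ 2 - γ * β),
   -arcsin (√(γ * β) / ε))

section Breather

variable {ε γ β : ℝ}

theorem twoSiteBreather_fst_mul_snd (hγ : 0 < γ) (hβ : 0 < β) :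
    (twoSiteBreather ε γ β).1 * (twoSiteBreather ε γ β).2.1 =
      (√(ε ^ 2 - γ * β) / 2) ^ 2 := by
  have h : √(γ / β) * √(β / γ) = 1 := by
    rw [← sqrt_mul (by positivity), div_mul_div_comm, mul_comm γ β,
      div_self (by positivity), sqrt_one]
  simp only [twoSiteBreather]
  linear_combination (√(ε ^ 2 - γ * β) / 2) ^ 2 * h

theorem sqrt_twoSiteBreather_fst_mul_snd (hγ : 0 < γ) (hβ : 0 < β) :
    √((twoSiteBreather ε γ β).1 * (twoSiteBreather ε γ β).2.1) =
      √(ε ^ 2 - γ * β) / 2 := by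
  rw [twoSiteBreather_fst_mul_snd hγ hβ, sqrt_sq (by positivity)]

theorem mul_twoSiteBreather_fst (hγ : 0 < γ) (hβ : 0 < β) :
    β * (twoSiteBreather ε γ β).1 = √(γ * β) * √(ε ^ 2 - γ * β) / 2 := by
  simp only [twoSiteBreather]
  rw [sqrt_div hγ.le, sqrt_mul hγ.le]
  field_simp
  rw [sq_sqrt hβ.le]

theorem mul_twoSiteBreather_snd_fst (hγ : 0 < γ) (hβ : 0 < β) :
    γ * (twoSiteBreather ε γ β).2.1 = √(γ * β) * √(ε ^ 2 - γ * β) / 2 := by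
  simp only [twoSiteBreather]
  rw [sqrt_div hβ.le, sqrt_mul hγ.le]
  field_simp
  rw [sq_sqrt hγ.le]

theorem sqrt_mul_lt_neg (hε : ε < 0) (h : γ * β < ε ^ 2) : √(γ * β) < -ε :=
  (sqrt_lt' (neg_pos.mpr hε)).mpr (by rwa [neg_sq])

theorem sin_twoSiteBreather_snd_snd (hε : ε < 0) (h : γ * β < ε ^ 2) :
    sin (twoSiteBreather ε γ β).2.2 = -(√(γ * β) / ε) := by
  have hlo : -1 ≤ √(γ * β) / ε := by
    rw [le_div_iff_of_neg hε]
    linarith [sqrt_mul_lt_neg hε h]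
  have hhi : √(γ * β) / ε ≤ 1 :=
    (div_nonpos_of_nonneg_of_nonpos (sqrt_nonneg _) hε.le).trans zero_le_one
  rw [twoSiteBreather, sin_neg, sin_arcsin hlo hhi]

theorem cos_twoSiteBreather_snd_snd (hγβ : 0 ≤ γ * β) (hε : ε < 0) (h : γ * β < ε ^ 2) :
    cos (twoSiteBreather ε γ β).2.2 = -(√(ε ^ 2 - γ * β) / ε) := by
  have hsq : 1 - (√(γ * β) / ε) ^ 2 = (-(√(ε ^ 2 - γ * β) / ε)) ^ 2 := by
    rw [div_pow, neg_sq, div_pow, sq_sqrt hγβ, sq_sqrt (by linarith)]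
    field_simp [hε.ne]
  rw [twoSiteBreather, cos_neg, cos_arcsin, hsq, sqrt_sq]
  exact neg_nonneg.mpr (div_nonpos_of_nonneg_of_nonpos (sqrt_nonneg _) hε.le)

end Breather

/-- The Jacobian of the two-site energy-phase system at the damped and driven
two-site breather is the matrix with rows `(β, −γ, −(ε² − γβ))`,
`(β, −γ, ε² − γβ)`, `(−1 + β/γ, 1 − γ/β, β − γ)`. -/
theorem stmt_13 (ε γ β : ℝ) (hγ : 0 < γ) (hβ : 0 < β) (hε : ε < 0)
    (h : γ * β < ε ^ 2) :
    ∀ v : ℝ × ℝ × ℝ,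
      fderiv ℝ (twoSiteField ε γ β)
        ((1 / 2) * Real.sqrt (γ / β) * Real.sqrt (ε ^ 2 - γ * β),
         (1 / 2) * Real.sqrt (β / γ) * Real.sqrt (ε ^ 2 - γ * β),
         -Real.arcsin (Real.sqrt (γ * β) / ε)) v =
      (β * v.1 - γ * v.2.1 - (ε ^ 2 - γ * β) * v.2.2,
       β * v.1 - γ * v.2.1 + (ε ^ 2 - γ * β) * v.2.2,
       (-1 + β / γ) * v.1 + (1 - γ / β) * v.2.1 + (β - γ) * v.2.2) := by
  have hS := sqrt_twoSiteBreather_fst_mul_snd (ε := ε) hγ hβ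
  refine fderiv_twoSiteField_apply_of_balance (x := twoSiteBreather ε γ β)
    ?pos hγ.ne' ?bal ?sin ?cos
  case pos => rw [twoSiteBreather_fst_mul_snd hγ hβ]; positivity
  case bal => rw [mul_twoSiteBreather_fst hγ hβ, mul_twoSiteBreather_snd_fst hγ hβ]
  case sin =>
    rw [hS, sin_twoSiteBreather_snd_snd hε h, mul_twoSiteBreather_fst hγ hβ]
    field_simp [hε.ne]
  case cos =>
    rw [hS, cos_twoSiteBreather_snd_snd (mul_pos hγ hβ).le hε h]
    field_simp [hε.ne]
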